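/- Distance-two-pair case of the proof of Theorem 2: let m ≥ 5 and r ∈ ZMod m. For every fault pattern F with w(F) ≤ 2 whose observed syndrome has supp s(F) = {r−1, r+1}, flipping data bits 2r+1 and 2r+3 leaves a residual error of weight at most w(F); that is, wt(e(F) + 1_{2r+1} + 1_{2r+3}) ≤ w(F), where 1_{j} denotes the indicator vector of the single data position j. -/

import Mathlib

/-! A fault at cat qubit `a` other than a measurement error has the syndrome
`catSyndrome (indic a)` of a single cat-qubit flip and leaves, after flipping data bit `2a+1`,
a residual of weight at most one; a measurement error at `a` has syndrome `indic a` and no data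
error. Every `catSyndrome` has even total weight, so the number of measurement errors is even:
with `w(F) ≤ 2` either both faults are measurement errors, and the residual is just the two
flipped bits, or none is. In the latter case the cat-qubit pattern of `F` has the same syndrome
as `indic r + indic (r + 1)`; on the `m`-cycle two patterns with the same syndrome differ by `0`
or by the all-ones vector, and the latter has weight `m > 2 + 2`. So the flipped bits are the
odd lift of the cat-qubit pattern of `F`, and the residual is the sum of the per-fault residuals.
-/

open scoped Classical

namespace CutCat

/-- A fault in the cut-cat single-round fault model, located at cat qubit `r`. -/
inductive Fault (m : ℕ) where
  | pre  (r : ZMod m)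
  | mid  (r : ZMod m)
  | post (r : ZMod m)
  | meas (r : ZMod m)

variable {m : ℕ}

/-- The index (in `ZMod (2*m)`) of the data qubit `2r` coupled to cat qubit `r`. -/
def d0 (r : ZMod m) : ZMod (2 * m) := 2 * (r.val : ZMod (2 * m))

/-- The data-qubit error contributed by a single fault. -/
def Fault.dataErr : Fault m → ZMod (2 * m) → ZMod 2
  | .pre r  => fun q => (if q = d0 r then 1 else 0) + (if q = d0 r + 1 then 1 else 0)
  | .mid r  => fun q => if q = d0 r + 1 then 1 else 0
  | .post _ => 0
  | .meas _ => 0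

/-- The cat-stabilizer syndrome contribution of a single fault
    (syndrome bit `j` checks cat qubits `j` and `j+1`). -/
def Fault.syn : Fault m → ZMod m → ZMod 2
  | .pre r  => fun j => (if j = r - 1 then 1 else 0) + (if j = r then 1 else 0)
  | .mid r  => fun j => (if j = r - 1 then 1 else 0) + (if j = r then 1 else 0)
  | .post r => fun j => (if j = r - 1 then 1 else 0) + (if j = r then 1 else 0)
  | .meas r => fun j => if j = r then 1 else 0

/-- The data error `e(F)` of a fault pattern `F` (coordinatewise mod-2 sum). -/
def dataErr (F : Multiset (Fault m)) : ZMod (2 * m) → ZMod 2 :=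
  (F.map Fault.dataErr).sum

/-- The observed syndrome `s(F)` of a fault pattern `F` (coordinatewise mod-2 sum). -/
def synd (F : Multiset (Fault m)) : ZMod m → ZMod 2 :=
  (F.map Fault.syn).sum

/-- Hamming weight of a binary vector. -/
noncomputable def wt {n : ℕ} (f : ZMod n → ZMod 2) : ℕ := {i | f i ≠ 0}.ncard

/-- The set of triggered syndrome bits, `supp s(F)`. -/
def suppSyn (F : Multiset (Fault m)) : Set (ZMod m) := {j | synd F j = 1}

/-- Boundary of a set of cat qubits: checks `j` with exactly one of `j`, `j+1` in `E`. -/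
def boundary (E : Set (ZMod m)) : Set (ZMod m) := {j | Xor' (j ∈ E) (j + 1 ∈ E)}

/-- Indicator (as a binary data vector) of the set `{2r+1 : r ∈ E}`. -/
noncomputable def indicOdd (E : Set (ZMod m)) : ZMod (2 * m) → ZMod 2 :=
  fun q => if ∃ r ∈ E, q = d0 r + 1 then 1 else 0

/-- Indicator of a single data position `j`. -/
def indic {n : ℕ} (j : ZMod n) : ZMod n → ZMod 2 := fun q => if q = j then 1 else 0

/-- `c` is the correction output by the minimum-weight decoder with parameter `t`
    on syndrome `s(F)`: if there is a set `E` of at most `t` cat qubits whose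
    boundary equals `supp s(F)`, then `c` is the indicator of `{2r+1 : r ∈ E}`;
    otherwise `c = 0`. -/
def IsDecoderCorrection (t : ℕ) (F : Multiset (Fault m)) (c : ZMod (2 * m) → ZMod 2) : Prop :=
  (∃ E : Set (ZMod m), E.ncard ≤ t ∧ boundary E = suppSyn F ∧ c = indicOdd E) ∨
  ((¬ ∃ E : Set (ZMod m), E.ncard ≤ t ∧ boundary E = suppSyn F) ∧ c = 0)

/-- `true` iff the fault is a measurement fault. -/
def Fault.isMeas : Fault m → Bool
  | .meas _ => true
  | _ => false

end CutCat

namespace CutCat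

section BinaryVectors

lemma wt_indic {n : ℕ} (a : ZMod n) : wt (indic a) = 1 := by
  simp [wt, indic]

lemma eq_indic_add_indic {n : ℕ} {v : ZMod n → ZMod 2} {x y : ZMod n} (hxy : x ≠ y)
    (hv : {j | v j = 1} = {x, y}) : v = indic x + indic y := by
  funext j
  have hj : v j = 1 ↔ j = x ∨ j = y := Set.ext_iff.mp hv j
  by_cases hx : j = x <;> by_cases hy : j = y
  · exact absurd (hx.symm.trans hy) hxy
  · subst hx; simp [indic, hy, hj]
  · subst hy; simp [indic, hx, hj]
  · have hj1 : v j ≠ 1 := by simp [hj, hx, hy]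
    simpa [indic, hx, hy] using (by decide : ∀ b : ZMod 2, b ≠ 1 → b = 0) _ hj1

variable {n : ℕ} [NeZero n]

lemma wt_add_le (u v : ZMod n → ZMod 2) : wt (u + v) ≤ wt u + wt v := by
  unfold wt
  calc {i | (u + v) i ≠ 0}.ncard ≤ ({i | u i ≠ 0} ∪ {i | v i ≠ 0}).ncard := by
        refine Set.ncard_le_ncard (fun i hi => ?_) (Set.toFinite _)
        by_contra h
        simp_all
    _ ≤ _ := Set.ncard_union_le _ _

lemma wt_multiset_sum_le_card (s : Multiset (ZMod n → ZMod 2)) (hs : ∀ v ∈ s, wt v ≤ 1) :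
    wt s.sum ≤ Multiset.card s := by
  induction s using Multiset.induction_on with
  | empty => simp [wt]
  | cons v s ih =>
    rw [Multiset.sum_cons, Multiset.card_cons]
    have hv := hs v (Multiset.mem_cons_self v s)
    have := ih fun w hw => hs w (Multiset.mem_cons_of_mem hw)
    linarith [wt_add_le v s.sum]

lemma wt_indic_add_indic_le (a b : ZMod n) : wt (indic a + indic b) ≤ 2 := by
  simpa [wt_indic] using wt_add_le (indic a) (indic b)

lemma wt_one : wt (1 : ZMod n → ZMod 2) = n := by
  simp [wt]

lemma sum_indic (a : ZMod n) : ∑ j, indic a j = 1 := by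
  simp [indic]

end BinaryVectors

section Cycle

variable {n : ℕ}

def catSyndrome : (ZMod n → ZMod 2) →+ (ZMod n → ZMod 2) where
  toFun g j := g j + g (j + 1)
  map_zero' := by ext; simp
  map_add' g h := by ext; simp only [Pi.add_apply]; ring

lemma catSyndrome_apply (g : ZMod n → ZMod 2) (j : ZMod n) :
    catSyndrome g j = g j + g (j + 1) := rfl

lemma catSyndrome_indic (a : ZMod n) : catSyndrome (indic a) = indic (a - 1) + indic a := by
  ext j
  simp only [catSyndrome_apply, indic, Pi.add_apply, eq_sub_iff_add_eq, add_comm]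

lemma catSyndrome_indic_add_indic_add_one (r : ZMod n) :
    catSyndrome (indic r + indic (r + 1)) = indic (r - 1) + indic (r + 1) := by
  rw [map_add, catSyndrome_indic, catSyndrome_indic, add_sub_cancel_right]
  ext j
  simp only [Pi.add_apply]
  linear_combination CharTwo.add_self_eq_zero (indic r j)

lemma sub_one_ne_add_one (hn : 2 < n) (r : ZMod n) : r - 1 ≠ r + 1 := fun h => by
  have h2 : ((2 : ℕ) : ZMod n) = 0 := by push_cast; linear_combination -h
  exact absurd (Nat.le_of_dvd two_pos ((ZMod.natCast_eq_zero_iff _ _).mp h2)) (by omega)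

variable [NeZero n]

lemma sum_catSyndrome (g : ZMod n → ZMod 2) : ∑ j, catSyndrome g j = 0 := by
  have hshift : ∑ j, g (j + 1) = ∑ j, g j := Equiv.sum_comp (Equiv.addRight (1 : ZMod n)) g
  simp only [catSyndrome_apply, Finset.sum_add_distrib, hshift, CharTwo.add_self_eq_zero]

lemma eq_const_of_catSyndrome_eq_zero {g : ZMod n → ZMod 2} (hg : catSyndrome g = 0) (j : ZMod n) :
    g j = g 0 := by
  have step (k : ℕ) : g (k + 1) = g k :=
    (CharTwo.add_eq_zero.mp (congrFun hg k)).symm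
  rw [← ZMod.natCast_zmod_val j]
  induction j.val with
  | zero => simp
  | succ k ih => rw [Nat.cast_succ, step, ih]

lemma eq_zero_of_catSyndrome_eq_zero {g : ZMod n → ZMod 2} (hg : catSyndrome g = 0)
    (hwt : wt g < n) : g = 0 := by
  have hconst : g = fun _ => g 0 := funext (eq_const_of_catSyndrome_eq_zero hg)
  rcases (by decide : ∀ b : ZMod 2, b = 0 ∨ b = 1) (g 0) with h0 | h1
  · rw [hconst, h0]; rfl
  · rw [hconst, h1] at hwt
    exact absurd wt_one (ne_of_lt hwt)

lemma eq_of_catSyndrome_eq {g h : ZMod n → ZMod 2} (hgh : catSyndrome g = catSyndrome h)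
    (hwt : wt g + wt h < n) : g = h := by
  have : g + h = 0 := by
    refine eq_zero_of_catSyndrome_eq_zero ?_ ((wt_add_le g h).trans_lt hwt)
    rw [map_add, hgh, CharTwo.add_self_eq_zero]
  exact CharTwo.add_eq_zero.mp this

end Cycle

variable {m : ℕ}

lemma d0_add [NeZero m] (a b : ZMod m) : d0 (a + b) = d0 a + d0 b := by
  have h := congrArg (Nat.cast : ℕ → ZMod (2 * m)) (Nat.mul_mod_mul_left 2 (a.val + b.val) m)
  rw [ZMod.natCast_mod] at h
  push_cast at h
  simp only [d0, ZMod.val_add, ← h]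
  ring

lemma d0_one (hm : 1 < m) : d0 (1 : ZMod m) = 2 := by
  simp [d0, ZMod.val_one_eq_one_mod, Nat.mod_eq_of_lt hm]

-- For `meas r` this is the syndrome bit `r`, not a cat qubit.
def Fault.loc : Fault m → ZMod m
  | .pre r | .mid r | .post r | .meas r => r

namespace Fault

lemma syn_of_not_isMeas {f : Fault m} (hf : f.isMeas = false) :
    f.syn = catSyndrome (indic f.loc) := by
  rw [catSyndrome_indic]
  cases f <;> first | (funext j; rfl) | cases hf

lemma syn_of_isMeas {f : Fault m} (hf : f.isMeas) : f.syn = indic f.loc := by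
  cases f <;> first | (funext j; rfl) | cases hf

lemma dataErr_of_isMeas {f : Fault m} (hf : f.isMeas) : f.dataErr = 0 := by
  cases f <;> first | (funext j; rfl) | cases hf

lemma sum_syn [NeZero m] (f : Fault m) : ∑ j, f.syn j = if f.isMeas then 1 else 0 := by
  cases hf : f.isMeas
  · simp [syn_of_not_isMeas hf, sum_catSyndrome]
  · simp [syn_of_isMeas hf, sum_indic]

lemma wt_dataErr_add_indic_le_one (f : Fault m) : wt (f.dataErr + indic (d0 f.loc + 1)) ≤ 1 := by
  cases f with
  | pre r =>
    change wt ((pre r).dataErr + indic (d0 r + 1)) ≤ 1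
    have hres : (pre r).dataErr + indic (d0 r + 1) = indic (d0 r) := by
      ext q; simp only [dataErr, indic, Pi.add_apply, add_assoc, CharTwo.add_self_eq_zero, add_zero]
    rw [hres, wt_indic]
  | mid r =>
    change wt ((mid r).dataErr + indic (d0 r + 1)) ≤ 1
    have hres : (mid r).dataErr + indic (d0 r + 1) = 0 := by
      ext q; exact CharTwo.add_self_eq_zero _
    rw [hres]
    simp [wt]
  | post r | meas r => simp [loc, dataErr, wt_indic]

end Fault

def catErr (F : Multiset (Fault m)) : ZMod m → ZMod 2 := (F.map fun f => indic f.loc).sum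

lemma wt_catErr_le [NeZero m] (F : Multiset (Fault m)) : wt (catErr F) ≤ Multiset.card F := by
  calc wt (catErr F) ≤ Multiset.card (F.map fun f => indic f.loc) :=
        wt_multiset_sum_le_card _ (by simp [wt_indic])
    _ = Multiset.card F := Multiset.card_map _ _

lemma synd_eq_catSyndrome_catErr {F : Multiset (Fault m)} (hF : ∀ f ∈ F, f.isMeas = false) :
    synd F = catSyndrome (catErr F) := by
  rw [catErr, map_multiset_sum, Multiset.map_map, synd]
  exact congrArg _ (Multiset.map_congr rfl fun f hf => Fault.syn_of_not_isMeas (hF f hf))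

lemma dataErr_eq_zero {F : Multiset (Fault m)} (hF : ∀ f ∈ F, f.isMeas) : dataErr F = 0 :=
  Multiset.sum_eq_zero fun e he => by
    obtain ⟨f, hf, rfl⟩ := Multiset.mem_map.mp he
    exact Fault.dataErr_of_isMeas (hF f hf)

lemma sum_synd [NeZero m] (F : Multiset (Fault m)) :
    ∑ j, synd F j = Multiset.card (F.filter fun f => f.isMeas) := by
  induction F using Multiset.induction_on with
  | empty => simp [synd]
  | cons f F ih =>
    have hcons : synd (f ::ₘ F) = f.syn + synd F := by simp [synd]
    simp only [hcons, Pi.add_apply, Finset.sum_add_distrib, ih, Fault.sum_syn]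
    cases h : f.isMeas <;> simp [h, add_comm]

lemma even_card_filter_isMeas [NeZero m] {F : Multiset (Fault m)} {g : ZMod m → ZMod 2}
    (h : synd F = catSyndrome g) : Even (Multiset.card (F.filter fun f => f.isMeas)) := by
  rw [← ZMod.natCast_eq_zero_iff_even, ← sum_synd, h, sum_catSyndrome]

lemma catErr_eq_of_synd_eq [NeZero m] {F : Multiset (Fault m)} {g : ZMod m → ZMod 2}
    (hF : ∀ f ∈ F, f.isMeas = false) (h : synd F = catSyndrome g)
    (hwt : Multiset.card F + wt g < m) : catErr F = g :=
  eq_of_catSyndrome_eq ((synd_eq_catSyndrome_catErr hF).symm.trans h)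
    ((Nat.add_le_add_right (wt_catErr_le F) _).trans_lt hwt)

def oddLift [NeZero m] : (ZMod m → ZMod 2) →+ (ZMod (2 * m) → ZMod 2) where
  toFun g q := ∑ r, g r * indic (d0 r + 1) q
  map_zero' := by ext; simp
  map_add' g h := by ext; simp [add_mul, Finset.sum_add_distrib]

lemma oddLift_indic [NeZero m] (a : ZMod m) : oddLift (indic a) = indic (d0 a + 1) := by
  ext q
  simp only [oddLift, AddMonoidHom.coe_mk, ZeroHom.coe_mk, indic, ite_mul, one_mul, zero_mul,
    Finset.sum_ite_eq', Finset.mem_univ, if_true]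

lemma oddLift_indic_add_indic_add_one [NeZero m] (hm : 1 < m) (r : ZMod m) :
    oddLift (indic r + indic (r + 1)) = indic (d0 r + 1) + indic (d0 r + 3) := by
  rw [map_add, oddLift_indic, oddLift_indic, d0_add, d0_one hm, add_assoc]
  norm_num

lemma wt_dataErr_add_oddLift_catErr_le [NeZero m] (F : Multiset (Fault m)) :
    wt (dataErr F + oddLift (catErr F)) ≤ Multiset.card F := by
  have hsum : dataErr F + oddLift (catErr F)
      = (F.map fun f => f.dataErr + indic (d0 f.loc + 1)).sum := by
    rw [Multiset.sum_map_add, dataErr, catErr, map_multiset_sum, Multiset.map_map]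
    simp only [Function.comp_def, oddLift_indic]
  calc wt (dataErr F + oddLift (catErr F))
      ≤ Multiset.card (F.map fun f => f.dataErr + indic (d0 f.loc + 1)) := by
        rw [hsum]
        refine wt_multiset_sum_le_card _ fun v hv => ?_
        obtain ⟨f, -, rfl⟩ := Multiset.mem_map.mp hv
        exact f.wt_dataErr_add_indic_le_one
    _ = Multiset.card F := Multiset.card_map _ _

end CutCat

/-- Distance-two-pair case of the proof of Theorem 2: if `w(F) ≤ 2` and the
triggered stabilizers are exactly `{r-1, r+1}`, then flipping data bits
`2r+1` and `2r+3` leaves a residual error of weight at most `w(F)`. -/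
theorem cutcat_d5_distance_two_pair (m : ℕ) (hm : 5 ≤ m) (r : ZMod m)
    (F : Multiset (CutCat.Fault m)) (hF : Multiset.card F ≤ 2)
    (hs : CutCat.suppSyn F = {r - 1, r + 1}) :
    CutCat.wt (CutCat.dataErr F + CutCat.indic (CutCat.d0 r + 1)
        + CutCat.indic (CutCat.d0 r + 3)) ≤ Multiset.card F := by
  open CutCat in
  have : NeZero m := ⟨by omega⟩
  have hsynd : synd F = catSyndrome (indic r + indic (r + 1)) := by
    rw [catSyndrome_indic_add_indic_add_one]
    exact eq_indic_add_indic (sub_one_ne_add_one (by omega) r) hs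
  have hF0 : F ≠ 0 := by
    rintro rfl
    have : r - 1 ∈ suppSyn (0 : Multiset (Fault m)) := hs ▸ Set.mem_insert _ _
    simp [suppSyn, synd] at this
  have hmeas_le := Multiset.card_le_card (Multiset.filter_le (fun f => f.isMeas = true) F)
  have hpos := Multiset.card_pos.mpr hF0
  obtain ⟨k, hk⟩ := even_card_filter_isMeas hsynd
  rcases (show Multiset.card (F.filter fun f => f.isMeas) = 0
      ∨ Multiset.card F = 2 ∧ Multiset.card (F.filter fun f => f.isMeas) = 2 by omega)
    with hnone | ⟨hF2, hall⟩
  · have hnm : ∀ f ∈ F, f.isMeas = false := by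
      simpa using Multiset.filter_eq_nil.mp (Multiset.card_eq_zero.mp hnone)
    have hE := catErr_eq_of_synd_eq hnm hsynd
      (by linarith [wt_indic_add_indic_le r (r + 1)])
    rw [add_assoc, ← oddLift_indic_add_indic_add_one (by omega), ← hE]
    exact wt_dataErr_add_oddLift_catErr_le F
  · have hmeas : ∀ f ∈ F, f.isMeas := Multiset.filter_eq_self.mp
      (Multiset.eq_of_le_of_card_le (Multiset.filter_le _ _) (by omega))
    rw [dataErr_eq_zero hmeas, zero_add, hF2]
    exact wt_indic_add_indic_le _ _
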